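/- Let (G, l) be a connected finite labelled graph with at least two edges and no l-separating edge, and suppose G contains a loop e. Then G∖e is an element of X(G,l), i.e. G∖e is non-empty and has a connected component with non-trivial fundamental group or with at least two labelled vertices. -/

import Mathlib

open scoped Classical

noncomputable section

universe u v

/-- A finite multigraph (loops and multiple edges allowed): a finite vertex
type, a finite edge type and an endpoint map assigning to each edge an
unordered pair of vertices. -/
structure MGraph where
  V : Type
  E : Type
  [fV : Fintype V]
  [fE : Fintype E]
  ends : E → Sym2 V

attribute [instance] MGraph.fV MGraph.fE

namespace MGraph

variable (G : MGraph)

/-- The valence of a vertex `v` in the (edge-induced) subgraph `H` of `G`: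
the number of half-edges of `H` adjacent to `v` (a loop counts twice). -/
def valence (H : Finset G.E) (v : G.V) : ℕ :=
  ∑ e ∈ H, (if G.ends e = Sym2.diag v then 2 else if v ∈ G.ends e then 1 else 0)

/-- `v` is a vertex of the edge-induced subgraph `H`. -/
def vertexIn (H : Finset G.E) (v : G.V) : Prop := ∃ e ∈ H, v ∈ G.ends e

/-- Two vertices of `G` are connected by an edge path within the subgraph `H`. -/
def vconn (H : Finset G.E) : G.V → G.V → Prop :=
  Relation.ReflTransGen (fun a b => ∃ e ∈ H, G.ends e = s(a, b))

/-- The graph `G` is connected. -/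
def Conn : Prop := ∀ u v : G.V, G.vconn Finset.univ u v

/-- `G` has no isolated vertices. -/
def NoIsolated : Prop := ∀ v : G.V, ∃ e : G.E, v ∈ G.ends e

/-- The subgraph `H` has a connected component with non-trivial fundamental
group, i.e. `H` contains a cycle: equivalently, `H` contains a non-empty edge
subset in which no vertex has valence one. -/
def hasCycle (H : Finset G.E) : Prop :=
  ∃ S : Finset G.E, S ⊆ H ∧ S.Nonempty ∧ ∀ v, G.valence S v ≠ 1

/-- Defining condition of the poset `X(G,l)`: the subgraph `H` has a connected
component with non-trivial fundamental group, or a connected component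
containing at least two labelled vertices. -/
def inX (l : Finset G.V) (H : Finset G.E) : Prop :=
  G.hasCycle H ∨ ∃ u v, u ∈ l ∧ v ∈ l ∧ u ≠ v ∧ G.vconn H u v

/-- The poset `X(G,l)` of proper subgraphs of `G` having a connected component
with non-trivial fundamental group or with at least two labelled vertices,
ordered by inclusion. -/
def XP (l : Finset G.V) : Type :=
  {H : Finset G.E // H ⊂ Finset.univ ∧ G.inX l H}

instance (l : Finset G.V) : PartialOrder (G.XP l) :=
  inferInstanceAs (PartialOrder {_H : Finset G.E // _})

/-- A core subgraph of the labelled graph `(G,l)`: a non-empty subgraph in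
which every vertex of valence one is labelled. -/
def IsCore (l : Finset G.V) (H : Finset G.E) : Prop :=
  H.Nonempty ∧ ∀ v, G.valence H v = 1 → v ∈ l

/-- The edge `e` is separating: removing an interior point of `e` disconnects
`G`; combinatorially, `e` is not a loop and its two endpoints are not connected
in the graph with `e` deleted (in particular, leaves are separating). -/
def Separating (e : G.E) : Prop :=
  ∀ a b, G.ends e = s(a, b) → ¬ G.vconn (Finset.univ.erase e) a b

/-- The edge `e` of `(G,l)` is `l`-separating: it is separating, one of the
components of `G` minus the interior of `e` contains all labelled vertices, and
`G` with `e` deleted satisfies the defining condition of `X(G,l)`. -/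
def LSep (l : Finset G.V) (e : G.E) : Prop :=
  G.Separating e ∧
  (∃ a, a ∈ G.ends e ∧ ∀ u ∈ l, G.vconn (Finset.univ.erase e) a u) ∧
  G.inX l (Finset.univ.erase e)

end MGraph

/-!
Suppose `H = G ∖ e` is not in `X(G,l)`. Deleting a loop does not disconnect, so `H` still
connects all vertices; hence `l` has at most one vertex, and `H`, being a non-empty forest,
has a vertex `c` of valence one. Its edge `e'` is then `l`-separating in `G`: in `G ∖ e'` the
vertex `c` carries at most the loop `e`, every vertex stays connected to one of the two ends
of `e'` (so one side holds the at most one label), and the loop `e` is a cycle of `G ∖ e'`.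
-/

namespace MGraph

variable (G : MGraph)

lemma vconn_symm {H : Finset G.E} {u v : G.V} (h : G.vconn H u v) : G.vconn H v u := by
  induction h with
  | refl => exact Relation.ReflTransGen.refl
  | tail _ hstep ih =>
    obtain ⟨f, hf, hends⟩ := hstep
    exact Relation.ReflTransGen.head ⟨f, hf, hends.trans Sym2.eq_swap⟩ ih

lemma vconn_erase_of_ends_eq_diag {H : Finset G.E} {e : G.E} {a : G.V}
    (ha : G.ends e = Sym2.diag a) {u v : G.V} (h : G.vconn H u v) :
    G.vconn (H.erase e) u v := by
  induction h with
  | refl => exact .refl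
  | tail _ hstep ih =>
    obtain ⟨f, hf, hends⟩ := hstep
    by_cases hfe : f = e
    · subst hfe
      obtain ⟨rfl, rfl⟩ | ⟨rfl, rfl⟩ := Sym2.eq_iff.mp (hends.symm.trans ha) <;> exact ih
    · exact ih.tail ⟨f, Finset.mem_erase.mpr ⟨hfe, hf⟩, hends⟩

lemma vconn_erase_or {H : Finset G.E} {e' : G.E} {b c u : G.V}
    (hends : G.ends e' = s(b, c)) (h : G.vconn H b u) :
    G.vconn (H.erase e') b u ∨ G.vconn (H.erase e') c u := by
  induction h with
  | refl => exact .inl .refl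
  | @tail p q _ hstep ih =>
    obtain ⟨f, hf, hfends⟩ := hstep
    by_cases hfe : f = e'
    · subst hfe
      obtain ⟨-, rfl⟩ | ⟨-, rfl⟩ := Sym2.eq_iff.mp (hfends.symm.trans hends)
      exacts [.inr Relation.ReflTransGen.refl, .inl Relation.ReflTransGen.refl]
    · have hstep' : ∃ g ∈ H.erase e', G.ends g = s(p, q) :=
        ⟨f, Finset.mem_erase.mpr ⟨hfe, hf⟩, hfends⟩
      exact ih.imp (·.tail hstep') (·.tail hstep')

lemma eq_of_vconn_of_forall_ends_eq_diag {K : Finset G.E} {c z : G.V}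
    (hc : ∀ f ∈ K, c ∈ G.ends f → G.ends f = Sym2.diag c) (h : G.vconn K c z) : z = c := by
  induction h with
  | refl => rfl
  | tail _ hstep ih =>
    subst ih
    obtain ⟨f, hf, hends⟩ := hstep
    have hdiag := hends.symm.trans (hc f hf (hends ▸ Sym2.mem_mk_left _ _))
    exact (Sym2.eq_iff.mp hdiag).elim (·.2) (·.2)

lemma hasCycle_of_ends_eq_diag {H : Finset G.E} {e : G.E} {a : G.V} (he : e ∈ H)
    (ha : G.ends e = Sym2.diag a) : G.hasCycle H := by
  refine ⟨{e}, Finset.singleton_subset_iff.mpr he, Finset.singleton_nonempty e, fun v => ?_⟩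
  by_cases hva : v = a
  · simp [valence, ha, hva]
  · simp [valence, ha, Sym2.diag, hva, Ne.symm hva]

lemma exists_pendant_edge_of_valence_eq_one {H : Finset G.E} {c : G.V}
    (h : G.valence H c = 1) :
    ∃ e' ∈ H, ∃ b ≠ c, G.ends e' = s(b, c) ∧ ∀ f ∈ H, c ∈ G.ends f → f = e' := by
  set t : G.E → ℕ := fun f =>
    if G.ends f = Sym2.diag c then 2 else if c ∈ G.ends f then 1 else 0 with ht
  have hsum : ∑ f ∈ H, t f = 1 := h
  have hpos : ∀ f, c ∈ G.ends f → 1 ≤ t f := fun f hcf => by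
    simp only [ht]
    split_ifs <;> simp
  obtain ⟨e', he', hte'⟩ := Finset.exists_ne_zero_of_sum_ne_zero (hsum ▸ one_ne_zero)
  have hnd : G.ends e' ≠ Sym2.diag c := fun hd => by
    have hle := Finset.single_le_sum (f := t) (fun _ _ => Nat.zero_le _) he'
    rw [hsum] at hle
    simp [ht, hd] at hle
  have hmem : c ∈ G.ends e' := by
    by_contra hm
    simp [ht, hnd, hm] at hte'
  obtain ⟨b, hb⟩ : ∃ b, G.ends e' = s(b, c) :=
    ⟨_, (Sym2.other_spec hmem).symm.trans Sym2.eq_swap⟩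
  refine ⟨e', he', b, fun hbc => hnd (by rw [hb, hbc]; rfl), hb, fun f hf hcf => ?_⟩
  by_contra hfe
  have hpair := Finset.sum_le_sum_of_subset (f := t)
    (Finset.insert_subset_iff.mpr ⟨he', Finset.singleton_subset_iff.mpr hf⟩)
  rw [Finset.sum_pair (Ne.symm hfe), hsum] at hpair
  have := hpos e' hmem
  have := hpos f hcf
  omega

lemma separating_of_forall_ends_eq_diag {e' : G.E} {b c : G.V} (hbc : b ≠ c)
    (hends : G.ends e' = s(b, c))
    (hc : ∀ f ≠ e', c ∈ G.ends f → G.ends f = Sym2.diag c) : G.Separating e' := by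
  have hiso : ∀ {z}, G.vconn (Finset.univ.erase e') c z → z = c :=
    G.eq_of_vconn_of_forall_ends_eq_diag fun f hf => hc f (Finset.ne_of_mem_erase hf)
  intro x y hxy hconn
  obtain ⟨rfl, rfl⟩ | ⟨rfl, rfl⟩ := Sym2.eq_iff.mp (hxy.symm.trans hends)
  exacts [hbc (hiso (G.vconn_symm hconn)), hbc (hiso hconn)]

lemma exists_mem_ends_forall_vconn_erase (hconn : G.Conn) {l : Finset G.V}
    (hl : (l : Set G.V).Subsingleton) (e' : G.E) :
    ∃ a ∈ G.ends e', ∀ u ∈ l, G.vconn (Finset.univ.erase e') a u := by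
  obtain ⟨⟨b, c⟩, hends⟩ := Quot.exists_rep (G.ends e')
  replace hends : G.ends e' = s(b, c) := hends.symm
  rcases l.eq_empty_or_nonempty with rfl | ⟨u, hu⟩
  · exact ⟨b, hends ▸ Sym2.mem_mk_left b c, by simp⟩
  have hlu : ∀ v ∈ l, v = u := fun v hv => hl hv hu
  rcases G.vconn_erase_or hends (hconn b u) with hb | hc
  · exact ⟨b, hends ▸ Sym2.mem_mk_left b c, fun v hv => hlu v hv ▸ hb⟩
  · exact ⟨c, hends ▸ Sym2.mem_mk_right b c, fun v hv => hlu v hv ▸ hc⟩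

end MGraph

/-- Let `(G,l)` be a connected finite labelled graph with at
least two edges and no `l`-separating edge, and let `e` be a loop of `G`. Then
`G ∖ e` is an element of `X(G,l)`: it is non-empty, a proper subgraph, and has
a connected component with non-trivial fundamental group or with at least two
labelled vertices. -/
theorem loop_complement_in_XP
    (G : MGraph) (l : Finset G.V) (hconn : G.Conn)
    (hE : 2 ≤ Fintype.card G.E)
    (hnosep : ¬ ∃ e' : G.E, G.LSep l e')
    (e : G.E) (hloop : ∃ a : G.V, G.ends e = Sym2.diag a) :
    (Finset.univ.erase e).Nonempty ∧
    Finset.univ.erase e ⊂ (Finset.univ : Finset G.E) ∧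
    G.inX l (Finset.univ.erase e) := by
  obtain ⟨a, ha⟩ := hloop
  have hne : (Finset.univ.erase e).Nonempty :=
    Finset.Nontrivial.erase_nonempty (Finset.one_lt_card_iff_nontrivial.mp hE)
  refine ⟨hne, Finset.erase_ssubset (Finset.mem_univ e), ?_⟩
  by_contra hX
  obtain ⟨hacyclic, hlabels⟩ := not_or.mp hX
  have hl : (l : Set G.V).Subsingleton := fun u hu v hv => by_contra fun huv =>
    hlabels ⟨u, v, hu, hv, huv, G.vconn_erase_of_ends_eq_diag ha (hconn u v)⟩
  obtain ⟨c, hc⟩ : ∃ c, G.valence (Finset.univ.erase e) c = 1 := by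
    by_contra! h
    exact hacyclic ⟨_, subset_rfl, hne, h⟩
  obtain ⟨e', he', b, hbc, hends, honly⟩ := G.exists_pendant_edge_of_valence_eq_one hc
  have hpendant : ∀ f ≠ e', c ∈ G.ends f → G.ends f = Sym2.diag c := by
    intro f hfe' hcf
    by_cases hfe : f = e
    · subst hfe
      rw [ha] at hcf ⊢
      obtain rfl | rfl := Sym2.mem_iff.mp hcf <;> rfl
    · exact absurd (honly f (Finset.mem_erase.mpr ⟨hfe, Finset.mem_univ f⟩) hcf) hfe'
  have he'e : e ∈ Finset.univ.erase e' :=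
    Finset.mem_erase.mpr ⟨(Finset.ne_of_mem_erase he').symm, Finset.mem_univ e⟩
  exact hnosep ⟨e', G.separating_of_forall_ends_eq_diag hbc hends hpendant,
    G.exists_mem_ends_forall_vconn_erase hconn hl e',
    .inl (G.hasCycle_of_ends_eq_diag he'e ha)⟩
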